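/- Let A and B be stable matching instances on the same n workers and n firms such that all workers except possibly one worker w₁ have identical preference orders in A and B. If the set M_A ∩ M_B of matchings stable under both A and B is nonempty, then it contains a worker-optimal matching M*: a matching M* ∈ M_A ∩ M_B such that for every M ∈ M_A ∩ M_B and every worker w, w weakly prefers M*(w) to M(w) under its preference order in A and also under its preference order in B. -/

import Mathlib

/-- A stable matching instance on `n` workers and `n` firms: each worker `w` has a strict
total preference order over firms encoded by an injective rank function `wRank w`
(lower rank = more preferred), and each firm `f` has one over workers (`fRank f`). -/
structure SMInstance (n : ℕ) where
  wRank : Fin n → Fin n → Fin n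
  fRank : Fin n → Fin n → Fin n
  wRank_inj : ∀ w, Function.Injective (wRank w)
  fRank_inj : ∀ f, Function.Injective (fRank f)

/-- `(w, f)` is a blocking pair of the matching `M` under instance `I`:
`M w ≠ f`, `w` strictly prefers `f` to `M w`, and `f` strictly prefers `w`
to its `M`-partner (the worker `w'` with `M w' = f`). -/
def Blocking {n : ℕ} (I : SMInstance n) (M : Fin n → Fin n) (w f : Fin n) : Prop :=
  M w ≠ f ∧ I.wRank w f < I.wRank w (M w) ∧
    ∃ w', M w' = f ∧ I.fRank f w < I.fRank f w'

/-- A matching (bijection) is stable under `I` if it has no blocking pair. -/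
def IsStable {n : ℕ} (I : SMInstance n) (M : Fin n → Fin n) : Prop :=
  Function.Bijective M ∧ ∀ w f, ¬ Blocking I M w f

/-- The join `M₁ ∨_I M₂`: each worker gets its less preferred partner. -/
def joinMap {n : ℕ} (I : SMInstance n) (M₁ M₂ : Fin n → Fin n) : Fin n → Fin n :=
  fun w => if I.wRank w (M₁ w) < I.wRank w (M₂ w) then M₂ w else M₁ w

/-- The meet `M₁ ∧_I M₂`: each worker gets its more preferred partner. -/
def meetMap {n : ℕ} (I : SMInstance n) (M₁ M₂ : Fin n → Fin n) : Fin n → Fin n :=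
  fun w => if I.wRank w (M₁ w) < I.wRank w (M₂ w) then M₁ w else M₂ w

/-!
For a single instance `I`, the workerwise meet of two `I`-stable matchings is again `I`-stable.
If `A` and `B` differ only in the preferences of `w₁`, then for two matchings
stable under both the meets under `A` and under `B` agree at every worker other than `w₁`; both
are bijections, so they agree at `w₁` too. Hence `M_A ∩ M_B` is closed under the meet, and a
matching in it with least total rank under `A` is the meet of itself with every other one, which
makes it worker-optimal under both `A` and `B`.
-/

section Meet

variable {n : ℕ} (I : SMInstance n) (M₁ M₂ : Fin n → Fin n) (w : Fin n)

lemma meetMap_eq_or : meetMap I M₁ M₂ w = M₁ w ∨ meetMap I M₁ M₂ w = M₂ w := by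
  unfold meetMap
  split_ifs
  exacts [Or.inl rfl, Or.inr rfl]

lemma wRank_meetMap_le_left : I.wRank w (meetMap I M₁ M₂ w) ≤ I.wRank w (M₁ w) := by
  unfold meetMap
  split_ifs with h
  exacts [le_rfl, not_lt.mp h]

lemma wRank_meetMap_le_right : I.wRank w (meetMap I M₁ M₂ w) ≤ I.wRank w (M₂ w) := by
  unfold meetMap
  split_ifs with h
  exacts [h.le, le_rfl]

end Meet

lemma SMInstance.wRank_lt_of_le_of_ne {n : ℕ} (I : SMInstance n) {w f g : Fin n}
    (hle : I.wRank w f ≤ I.wRank w g) (hne : f ≠ g) : I.wRank w f < I.wRank w g :=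
  hle.lt_of_ne ((I.wRank_inj w).ne hne)

lemma IsStable.apply_ne_of_wRank_le {n : ℕ} {I : SMInstance n} {M₁ M₂ : Fin n → Fin n}
    (h₁ : IsStable I M₁) (h₂ : IsStable I M₂) {w w' : Fin n} (hww : w ≠ w')
    (hw : I.wRank w (M₁ w) ≤ I.wRank w (M₂ w))
    (hw' : I.wRank w' (M₂ w') ≤ I.wRank w' (M₁ w')) : M₁ w ≠ M₂ w' := by
  intro hf
  have hM₂w : M₂ w ≠ M₁ w := fun h => hww (h₂.1.1 (h.trans hf))
  have hM₁w' : M₁ w' ≠ M₂ w' := fun h => hww (h₁.1.1 (h.trans hf.symm).symm)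
  have hlt : I.wRank w (M₁ w) < I.wRank w (M₂ w) := I.wRank_lt_of_le_of_ne hw hM₂w.symm
  have hlt' : I.wRank w' (M₂ w') < I.wRank w' (M₁ w') := I.wRank_lt_of_le_of_ne hw' hM₁w'.symm
  -- the common firm blocks `M₂` with `w` or `M₁` with `w'`, whichever of the two it prefers
  rcases lt_trichotomy (I.fRank (M₁ w) w) (I.fRank (M₁ w) w') with h | h | h
  · exact h₂.2 w (M₁ w) ⟨hM₂w, hlt, w', hf.symm, h⟩
  · exact hww (I.fRank_inj _ h)
  · rw [hf] at h
    exact h₁.2 w' (M₂ w') ⟨hM₁w', hlt', w, hf, h⟩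

lemma Blocking.of_wRank_le {n : ℕ} {I : SMInstance n} {M N : Fin n → Fin n} {w f : Fin n}
    (hNM : I.wRank w (N w) ≤ I.wRank w (M w)) (h : Blocking I N w f)
    (hpartner : ∀ w', N w' = f → M w' = f) : Blocking I M w f := by
  obtain ⟨-, hlt, w', hw', hr⟩ := h
  have hlt' := hlt.trans_le hNM
  exact ⟨fun h => (h ▸ hlt').false, hlt', w', hpartner w' hw', hr⟩

lemma IsStable.meet {n : ℕ} {I : SMInstance n} {M₁ M₂ : Fin n → Fin n}
    (h₁ : IsStable I M₁) (h₂ : IsStable I M₂) : IsStable I (meetMap I M₁ M₂) := by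
  have hinj : Function.Injective (meetMap I M₁ M₂) := by
    intro w w' hN
    by_contra hww
    rcases meetMap_eq_or I M₁ M₂ w with e | e <;> rcases meetMap_eq_or I M₁ M₂ w' with e' | e'
    · exact hww (h₁.1.1 (e ▸ e' ▸ hN))
    · refine h₁.apply_ne_of_wRank_le h₂ hww ?_ ?_ (e ▸ e' ▸ hN)
      · exact e ▸ wRank_meetMap_le_right I M₁ M₂ w
      · exact e' ▸ wRank_meetMap_le_left I M₁ M₂ w'
    · refine h₂.apply_ne_of_wRank_le h₁ hww ?_ ?_ (e ▸ e' ▸ hN)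
      · exact e ▸ wRank_meetMap_le_left I M₁ M₂ w
      · exact e' ▸ wRank_meetMap_le_right I M₁ M₂ w'
    · exact hww (h₂.1.1 (e ▸ e' ▸ hN))
  refine ⟨Finite.injective_iff_bijective.mp hinj, fun w f hblock => ?_⟩
  obtain ⟨w', hw', -⟩ := hblock.2.2
  rcases meetMap_eq_or I M₁ M₂ w' with e | e
  · exact h₁.2 w f (hblock.of_wRank_le (wRank_meetMap_le_left I M₁ M₂ w)
      fun v hv => hinj (hv.trans hw'.symm) ▸ e ▸ hw')
  · exact h₂.2 w f (hblock.of_wRank_le (wRank_meetMap_le_right I M₁ M₂ w)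
      fun v hv => hinj (hv.trans hw'.symm) ▸ e ▸ hw')

lemma eq_of_injective_of_surjective_of_eq_off {α β : Type*} {g h : α → β}
    (hg : Function.Injective g) (hh : Function.Surjective h) (a₀ : α)
    (H : ∀ a, a ≠ a₀ → g a = h a) : g = h := by
  funext a
  by_cases ha : a = a₀
  · subst ha
    obtain ⟨b, hb⟩ := hh (g a)
    by_cases hba : b = a
    · rw [← hb, hba]
    · exact absurd (hg ((H b hba).trans hb)) hba
  · exact H a ha

lemma meetMap_eq_of_wRank_eq_off {n : ℕ} {A B : SMInstance n} {w₁ : Fin n}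
    (hW : ∀ w, w ≠ w₁ → A.wRank w = B.wRank w) {M₁ M₂ : Fin n → Fin n}
    (h₁ : IsStable A M₁ ∧ IsStable B M₁) (h₂ : IsStable A M₂ ∧ IsStable B M₂) :
    meetMap A M₁ M₂ = meetMap B M₁ M₂ :=
  eq_of_injective_of_surjective_of_eq_off (h₁.1.meet h₂.1).1.1 (h₁.2.meet h₂.2).1.2 w₁
    fun w hw => by simp only [meetMap, hW w hw]

def SMInstance.rankSum {n : ℕ} (I : SMInstance n) (M : Fin n → Fin n) : ℕ :=
  ∑ w, (I.wRank w (M w) : ℕ)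

lemma meetMap_eq_left_of_rankSum_le {n : ℕ} {I : SMInstance n} {M₁ M₂ : Fin n → Fin n}
    (h : I.rankSum M₁ ≤ I.rankSum (meetMap I M₁ M₂)) : meetMap I M₁ M₂ = M₁ := by
  have hle : ∀ w ∈ Finset.univ,
      (I.wRank w (meetMap I M₁ M₂ w) : ℕ) ≤ I.wRank w (M₁ w) :=
    fun w _ => wRank_meetMap_le_left I M₁ M₂ w
  have heq := (Finset.sum_eq_sum_iff_of_le hle).mp (h.antisymm' (Finset.sum_le_sum hle))
  funext w
  exact I.wRank_inj w (Fin.ext (heq w (Finset.mem_univ w)))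

theorem stmt11_general {n : ℕ} (A B : SMInstance n) (w₁ : Fin n)
    (hW : ∀ w, w ≠ w₁ → A.wRank w = B.wRank w)
    (hne : ∃ M, IsStable A M ∧ IsStable B M) :
    ∃ Mstar, (IsStable A Mstar ∧ IsStable B Mstar) ∧
      ∀ M, (IsStable A M ∧ IsStable B M) →
        ∀ w, A.wRank w (Mstar w) ≤ A.wRank w (M w) ∧
             B.wRank w (Mstar w) ≤ B.wRank w (M w) := by
  obtain ⟨Mstar, hstar, hmin⟩ :=
    Set.exists_min_image {M | IsStable A M ∧ IsStable B M} A.rankSum (Set.toFinite _) hne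
  refine ⟨Mstar, hstar, fun M hM w => ?_⟩
  have hAB := meetMap_eq_of_wRank_eq_off hW hstar hM
  have hmeet : IsStable A (meetMap A Mstar M) ∧ IsStable B (meetMap A Mstar M) :=
    ⟨hstar.1.meet hM.1, hAB ▸ hstar.2.meet hM.2⟩
  have hA : meetMap A Mstar M = Mstar := meetMap_eq_left_of_rankSum_le (hmin _ hmeet)
  have hB : meetMap B Mstar M = Mstar := hAB ▸ hA
  exact ⟨hA ▸ wRank_meetMap_le_right A Mstar M w, hB ▸ wRank_meetMap_le_right B Mstar M w⟩

/-- if A and B are (1,n) and some matching is stable under both, then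
there is a worker-optimal matching stable under both: every worker weakly prefers its
partner there, under its preference order in A and also in B. -/
theorem stmt11 {n : ℕ} (hn : 1 ≤ n) (A B : SMInstance n) (w₁ : Fin n)
    (hW : ∀ w, w ≠ w₁ → A.wRank w = B.wRank w)
    (hne : ∃ M, IsStable A M ∧ IsStable B M) :
    ∃ Mstar, (IsStable A Mstar ∧ IsStable B Mstar) ∧
      ∀ M, (IsStable A M ∧ IsStable B M) →
        ∀ w, A.wRank w (Mstar w) ≤ A.wRank w (M w) ∧
             B.wRank w (Mstar w) ≤ B.wRank w (M w) :=
  stmt11_general A B w₁ hW hne
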